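/- arXiv:2509.06748 — 6 statements merged into one kernel-verified Lean document; each statement's English description precedes it below -/
import Mathlib

section
/- Let (V, A, 𝔞) be a pointwise affine system, writing p(v) for 𝔞(p)(v) and p + v̄ for p + p(v). Then A is affine flat (i.e., p(v) = q(v) for all p, q ∈ A and v ∈ V) if and only if for all p ∈ A and u, v ∈ V, the translation ((p + ū) + v̄) ← (p + (p(u) + p(v))) equals the zero translation. -/
/-- A pointwise affine space `A` (each point `p` has a linear isomorphism
`𝔞 p : V ≃ W` onto the translation group `W` of `A`) is affine flat iff
`((p+ū)+v̄) ← (p+(p(u)+p(v)))` is the zero translation for all `p, u, v`. -/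
theorem affine_flat_iff_displacement_defect_vanishes
    {K V W A : Type*} [Field K] [AddCommGroup V] [Module K V]
    [AddCommGroup W] [Module K W] [AddTorsor W A]
    (𝔞 : A → (V ≃ₗ[K] W)) :
    (∀ (p q : A) (v : V), 𝔞 p v = 𝔞 q v) ↔
    (∀ (p : A) (u v : V),
      ((𝔞 (𝔞 p u +ᵥ p) v +ᵥ (𝔞 p u +ᵥ p)) -ᵥ ((𝔞 p u + 𝔞 p v) +ᵥ p) : W) = 0) := by
  have key : ∀ (p : A) (u v : V),
      ((𝔞 (𝔞 p u +ᵥ p) v +ᵥ (𝔞 p u +ᵥ p)) -ᵥ ((𝔞 p u + 𝔞 p v) +ᵥ p) : W)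
        = 𝔞 (𝔞 p u +ᵥ p) v - 𝔞 p v := by
    intro p u v
    rw [vadd_vadd, vadd_vsub_vadd_cancel_right]
    abel
  constructor
  · intro h p u v
    rw [key, h (𝔞 p u +ᵥ p) p v, sub_self]
  · intro h p q v
    have := h p ((𝔞 p).symm (q -ᵥ p)) v
    rw [key] at this
    simp only [LinearEquiv.apply_symm_apply, vsub_vadd] at this
    exact (sub_eq_zero.mp this).symm
end

section
/- In a differentiable pointwise affine space, if the pseudo-derivative Δ_u v(p) = lim_{τ→0} (1/τ)(p⁻¹∘(p + τu‾)(v) − v) is additive in u, then it is homogeneous in u: Δ_{cu} v(p) = c·Δ_u v(p) for all scalars c. -/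
open Filter Topology

/-- If the pseudo-derivative `Δ_u v(p)` exists for all `p, u, v` and is
additive in `u`, then it is homogeneous in `u`. -/
theorem pseudo_derivative_homogeneous
    {V W A : Type*} [NormedAddCommGroup V] [NormedSpace ℝ V]
    [AddCommGroup W] [Module ℝ W] [AddTorsor W A]
    (𝔞 : A → (V ≃ₗ[ℝ] W)) (Δ : V → V → A → V)
    (hΔ : ∀ (u v : V) (p : A),
      Tendsto (fun τ : ℝ =>
          τ⁻¹ • ((𝔞 p).symm (𝔞 (𝔞 p (τ • u) +ᵥ p) v) - v))
        (𝓝[≠] 0) (𝓝 (Δ u v p)))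
    (hadd : ∀ (u u' v : V) (p : A), Δ (u + u') v p = Δ u v p + Δ u' v p)
    (c : ℝ) (u v : V) (p : A) :
    Δ (c • u) v p = c • Δ u v p := by
  rcases eq_or_ne c 0 with rfl | hc
  · have h0 : Δ 0 v p = 0 := by
      have h := hadd 0 0 v p
      rw [add_zero] at h
      exact left_eq_add.mp h
    simp [h0]
  · have hmap : Tendsto (fun τ : ℝ => c * τ) (𝓝[≠] (0:ℝ)) (𝓝[≠] (0:ℝ)) := by
      apply tendsto_nhdsWithin_of_tendsto_nhds_of_eventually_within
      · have : Tendsto (fun τ : ℝ => c * τ) (𝓝 0) (𝓝 (c * 0)) :=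
          (continuous_const.mul continuous_id).tendsto 0
        rw [mul_zero] at this
        exact this.mono_left nhdsWithin_le_nhds
      · filter_upwards [self_mem_nhdsWithin] with τ hτ
        exact mul_ne_zero hc hτ
    have h2 := ((hΔ u v p).comp hmap).const_smul c
    refine tendsto_nhds_unique (hΔ (c • u) v p) (h2.congr' ?_)
    filter_upwards [self_mem_nhdsWithin] with τ hτ
    simp only [Function.comp]
    rw [smul_smul, smul_smul, mul_inv, ← mul_assoc, mul_inv_cancel₀ hc, one_mul,
      mul_comm τ c]
end

section
/- In a pointwise affine system, the vector version of the discrete affine Riemann curvature equals the difference of the interval-defects of iterated and simple displacements: R⃗_{uvw}(p) = [M_{uv}w(p)] − [M_u v(p)], where [M_{uv}w(p)] = M_{uv}w(p) ← M_{vu}w(p) and [M_u v(p)] = M_u v(p) ← M_v u(p). -/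
section
variable {K V W A : Type*} [Field K] [AddCommGroup V] [Module K V]
  [AddCommGroup W] [Module K W] [AddTorsor W A]

/-- The deviation `G_u v(p) = p⁻¹((p+ū)(v))`. -/
def dev (𝔞 : A → (V ≃ₗ[K] W)) (u v : V) (p : A) : V :=
  (𝔞 p).symm (𝔞 (𝔞 p u +ᵥ p) v)

/-- The dissociation `D_u v(p) = G_u v(p) − v`. -/
def diss (𝔞 : A → (V ≃ₗ[K] W)) (u v : V) (p : A) : V :=
  dev 𝔞 u v p - v

/-- The displacement `M_u v(p) = (p+ū)+v̄`. -/
def disp (𝔞 : A → (V ≃ₗ[K] W)) (u v : V) (p : A) : A :=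
  𝔞 (𝔞 p u +ᵥ p) v +ᵥ (𝔞 p u +ᵥ p)

/-- The iterated displacement
`M_{uv}w(p) = ((p+ū)+v̄) + (p+ū)∘p⁻¹∘(p+v̄)(w)`. -/
def disp2 (𝔞 : A → (V ≃ₗ[K] W)) (u v w : V) (p : A) : A :=
  𝔞 (𝔞 p u +ᵥ p) ((𝔞 p).symm (𝔞 (𝔞 p v +ᵥ p) w)) +ᵥ disp 𝔞 u v p

/-- `R⃗_{uvw}(p) = [M_{uv}w(p)] − [M_u v(p)]`. -/
theorem riemann_eq_displacement_defects (𝔞 : A → (V ≃ₗ[K] W)) (u v w : V) (p : A) :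
    𝔞 p (diss 𝔞 u (diss 𝔞 v w p) p - diss 𝔞 v (diss 𝔞 u w p) p) =
      (disp2 𝔞 u v w p -ᵥ disp2 𝔞 v u w p) - (disp 𝔞 u v p -ᵥ disp 𝔞 v u p) := by
  simp only [disp2, diss, dev, vadd_vsub_vadd_cancel_right, map_sub,
    LinearEquiv.apply_symm_apply, vadd_vsub_assoc, vsub_vadd_eq_vsub_sub]
  abel

end
end

section
/- In a pointwise affine system, the discrete cumulative second-order skew-curvature C_{uvw}(p) := T_{uv}(p) + R_{uvw}(p) satisfies C⃗_{uvw}(p) = M_{uv}w(p) ← M_{vu}w(p), i.e., its vector version equals the translation from the iterated displacement M_{vu}w(p) to M_{uv}w(p). -/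
section
variable {K V W A : Type*} [Field K] [AddCommGroup V] [Module K V]
  [AddCommGroup W] [Module K W] [AddTorsor W A]

/-- `C⃗_{uvw}(p) = M_{uv}w(p) ← M_{vu}w(p)` for the cumulative second-order
skew-curvature `C_{uvw}(p) = T_{uv}(p) + R_{uvw}(p)`. -/
theorem cumulative_curvature_eq_iterated_displacement_defect
    (𝔞 : A → (V ≃ₗ[K] W)) (u v w : V) (p : A) :
    𝔞 p ((diss 𝔞 u v p - diss 𝔞 v u p) +
        (diss 𝔞 u (diss 𝔞 v w p) p - diss 𝔞 v (diss 𝔞 u w p) p)) =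
      disp2 𝔞 u v w p -ᵥ disp2 𝔞 v u w p := by
  simp only [disp2, disp, diss, dev, ← add_vadd, vadd_vsub_vadd_cancel_right,
    map_sub, map_add, LinearEquiv.apply_symm_apply]
  abel

end
end

section
/- Product rule for the pseudo-derivative: let ⟨⟨·,·⟩⟩ be a continuous bilinear map of vectors. If the pseudo-derivatives Δ_u v(p) and Δ_u w(p) exist, then Δ_u⟨⟨v,w⟩⟩(p) := lim_{τ→0} (1/τ)(⟨⟨P_τ(v), P_τ(w)⟩⟩ − ⟨⟨v,w⟩⟩), with P_τ = p⁻¹∘(p+τu‾), exists and equals ⟨⟨v, Δ_u w(p)⟩⟩ + ⟨⟨Δ_u v(p), w⟩⟩. -/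
open Filter Topology

set_option maxHeartbeats 1000000

/-- Product rule for the pseudo-derivative with respect to a continuous
bilinear map `B`. -/
theorem pseudo_derivative_product_rule
    {V W A X : Type*} [NormedAddCommGroup V] [NormedSpace ℝ V]
    [AddCommGroup W] [Module ℝ W] [AddTorsor W A]
    [NormedAddCommGroup X] [NormedSpace ℝ X]
    (𝔞 : A → (V ≃ₗ[ℝ] W)) (B : V →L[ℝ] V →L[ℝ] X)
    (u v w : V) (p : A) (Dv Dw : V)
    (hv : Tendsto (fun τ : ℝ =>
        τ⁻¹ • ((𝔞 p).symm (𝔞 (𝔞 p (τ • u) +ᵥ p) v) - v)) (𝓝[≠] 0) (𝓝 Dv))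
    (hw : Tendsto (fun τ : ℝ =>
        τ⁻¹ • ((𝔞 p).symm (𝔞 (𝔞 p (τ • u) +ᵥ p) w) - w)) (𝓝[≠] 0) (𝓝 Dw)) :
    Tendsto (fun τ : ℝ =>
        τ⁻¹ • (B ((𝔞 p).symm (𝔞 (𝔞 p (τ • u) +ᵥ p) v))
                 ((𝔞 p).symm (𝔞 (𝔞 p (τ • u) +ᵥ p) w)) - B v w))
      (𝓝[≠] 0) (𝓝 (B v Dw + B Dv w)) := by
  set f : ℝ → V := fun τ => (𝔞 p).symm (𝔞 (𝔞 p (τ • u) +ᵥ p) v) with hf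
  set g : ℝ → V := fun τ => (𝔞 p).symm (𝔞 (𝔞 p (τ • u) +ᵥ p) w) with hg
  -- g tends to w
  have hτ : Tendsto (fun τ : ℝ => τ) (𝓝[≠] (0:ℝ)) (𝓝 0) :=
    tendsto_id.mono_left nhdsWithin_le_nhds
  have hg_w : Tendsto g (𝓝[≠] (0:ℝ)) (𝓝 w) := by
    have h1 : Tendsto (fun τ : ℝ => τ • (τ⁻¹ • (g τ - w)) + w) (𝓝[≠] (0:ℝ))
        (𝓝 ((0:ℝ) • Dw + w)) := ((hτ.smul hw).add tendsto_const_nhds)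
    rw [zero_smul, zero_add] at h1
    refine h1.congr' ?_
    filter_upwards [self_mem_nhdsWithin] with τ (hτne : τ ≠ 0)
    rw [smul_smul, mul_inv_cancel₀ hτne, one_smul, sub_add_cancel]
  -- main decomposition
  have key : Tendsto (fun τ : ℝ =>
      B (τ⁻¹ • (f τ - v)) (g τ) + B v (τ⁻¹ • (g τ - w))) (𝓝[≠] (0:ℝ))
      (𝓝 (B Dv w + B v Dw)) := by
    have h1 : Tendsto (fun τ : ℝ => B (τ⁻¹ • (f τ - v)) (g τ)) (𝓝[≠] (0:ℝ))
        (𝓝 (B Dv w)) :=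
      (B.continuous₂.tendsto (Dv, w)).comp (hv.prodMk_nhds hg_w)
    have h2 : Tendsto (fun τ : ℝ => B v (τ⁻¹ • (g τ - w))) (𝓝[≠] (0:ℝ))
        (𝓝 (B v Dw)) := ((B v).continuous.tendsto Dw).comp hw
    exact h1.add h2
  rw [add_comm (B v Dw)]
  refine key.congr' ?_
  filter_upwards [self_mem_nhdsWithin] with τ (hτne : τ ≠ 0)
  have key_eq : ∀ a b : V, B (τ⁻¹ • (a - v)) b + B v (τ⁻¹ • (b - w))
      = τ⁻¹ • (B a b - B v w) := by
    intro a b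
    simp only [map_smul, map_sub, ContinuousLinearMap.smul_apply,
      ContinuousLinearMap.sub_apply, smul_sub]
    abel
  exact key_eq (f τ) (g τ)
end

section
/- Product rule for coherent reduced derivatives: let ⟨⟨·,·⟩⟩ be a continuous bilinear map and v, w vector fields on a differentiable pointwise affine space. If the reduced derivatives ∇_u v(p) and ∇_u w(p) exist, then ∇_u⟨⟨v,w⟩⟩(p) := lim_{τ→0} (1/τ)(⟨⟨P_τ(v(p+τu‾)), P_τ(w(p+τu‾))⟩⟩ − ⟨⟨v(p), w(p)⟩⟩) exists and equals ⟨⟨v(p), ∇_u w(p)⟩⟩ + ⟨⟨∇_u v(p), w(p)⟩⟩, where P_τ = p⁻¹∘(p+τu‾). -/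
open Filter Topology
set_option maxHeartbeats 1000000

/-- Product rule for coherent reduced derivatives of vector fields with
respect to a continuous bilinear map `B`. -/
theorem reduced_derivative_product_rule
    {V W A X : Type*} [NormedAddCommGroup V] [NormedSpace ℝ V]
    [AddCommGroup W] [Module ℝ W] [AddTorsor W A]
    [NormedAddCommGroup X] [NormedSpace ℝ X]
    (𝔞 : A → (V ≃ₗ[ℝ] W)) (B : V →L[ℝ] V →L[ℝ] X)
    (v w : A → V) (u : V) (p : A) (Nv Nw : V)
    (hdiff : ∀ x : V, Tendsto (fun τ : ℝ =>
        (𝔞 p).symm (𝔞 (𝔞 p (τ • u) +ᵥ p) x) - x) (𝓝[≠] 0) (𝓝 0))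
    (hv : Tendsto (fun τ : ℝ =>
        τ⁻¹ • ((𝔞 p).symm (𝔞 (𝔞 p (τ • u) +ᵥ p) (v (𝔞 p (τ • u) +ᵥ p))) - v p))
      (𝓝[≠] 0) (𝓝 Nv))
    (hw : Tendsto (fun τ : ℝ =>
        τ⁻¹ • ((𝔞 p).symm (𝔞 (𝔞 p (τ • u) +ᵥ p) (w (𝔞 p (τ • u) +ᵥ p))) - w p))
      (𝓝[≠] 0) (𝓝 Nw)) :
    Tendsto (fun τ : ℝ =>
        τ⁻¹ • (B ((𝔞 p).symm (𝔞 (𝔞 p (τ • u) +ᵥ p) (v (𝔞 p (τ • u) +ᵥ p))))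
                 ((𝔞 p).symm (𝔞 (𝔞 p (τ • u) +ᵥ p) (w (𝔞 p (τ • u) +ᵥ p)))) -
               B (v p) (w p)))
      (𝓝[≠] 0) (𝓝 (B (v p) Nw + B Nv (w p))) := by
  set Vτ : ℝ → V := fun τ => (𝔞 p).symm (𝔞 (𝔞 p (τ • u) +ᵥ p) (v (𝔞 p (τ • u) +ᵥ p))) with hVτ
  set Wτ : ℝ → V := fun τ => (𝔞 p).symm (𝔞 (𝔞 p (τ • u) +ᵥ p) (w (𝔞 p (τ • u) +ᵥ p))) with hWτ
  -- Vτ tends to v p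
  have hid : Tendsto (fun τ : ℝ => τ) (𝓝[≠] (0:ℝ)) (𝓝 0) := tendsto_nhdsWithin_of_tendsto_nhds tendsto_id
  have hVlim : Tendsto Vτ (𝓝[≠] (0:ℝ)) (𝓝 (v p)) := by
    have h1 : Tendsto (fun τ : ℝ => τ • (τ⁻¹ • (Vτ τ - v p))) (𝓝[≠] (0:ℝ)) (𝓝 ((0:ℝ) • Nv)) :=
      hid.smul hv
    rw [zero_smul] at h1
    have h2 : Tendsto (fun τ : ℝ => Vτ τ - v p) (𝓝[≠] (0:ℝ)) (𝓝 0) := by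
      refine h1.congr' ?_
      filter_upwards [self_mem_nhdsWithin] with τ hτ
      rw [smul_smul, mul_inv_cancel₀ hτ, one_smul]
    have := h2.add_const (v p)
    simpa using this
  -- the decomposed limit
  have hmain : Tendsto (fun τ : ℝ =>
      B (Vτ τ) (τ⁻¹ • (Wτ τ - w p)) + B (τ⁻¹ • (Vτ τ - v p)) (w p))
      (𝓝[≠] (0:ℝ)) (𝓝 (B (v p) Nw + B Nv (w p))) := by
    have hB : Continuous (fun q : V × V => B q.1 q.2) := B.continuous₂
    have t1 : Tendsto (fun τ : ℝ => B (Vτ τ) (τ⁻¹ • (Wτ τ - w p)))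
        (𝓝[≠] (0:ℝ)) (𝓝 (B (v p) Nw)) :=
      (hB.tendsto (v p, Nw)).comp (hVlim.prodMk_nhds hw)
    have t2 : Tendsto (fun τ : ℝ => B (τ⁻¹ • (Vτ τ - v p)) (w p))
        (𝓝[≠] (0:ℝ)) (𝓝 (B Nv (w p))) :=
      (hB.tendsto (Nv, w p)).comp (hv.prodMk_nhds tendsto_const_nhds)
    exact t1.add t2
  refine hmain.congr' ?_
  filter_upwards [self_mem_nhdsWithin] with τ hτ
  have : B (Vτ τ) (Wτ τ) - B (v p) (w p)
      = B (Vτ τ) (Wτ τ - w p) + B (Vτ τ - v p) (w p) := by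
    simp only [map_sub, ContinuousLinearMap.sub_apply]
    abel
  rw [this, smul_add]
  simp only [map_smul, ContinuousLinearMap.smul_apply, ContinuousLinearMap.map_smul]
end
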